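/- Quotient homomorphisms of weak representations preserve strength of composition: if (h,i) : φ → ψ is a homomorphism of weak representations with h surjective and proper, both h and the relation-image map being compatible with φ and ψ properly (the square commutes with equality), and φ is a proper homomorphism, then ψ is a proper homomorphism. -/
import Mathlib


/-- A non-associative algebra in the sense of Ligozat–Renz: a Boolean algebra
equipped with an identity element `delta`, a converse operation `conv` and a
composition `comp` satisfying the usual laws. -/
class NAAlg (α : Type*) extends BooleanAlgebra α where
  comp : α → α → α
  conv : α → α
  delta : α
  conv_conv : ∀ a : α, conv (conv a) = a
  delta_comp : ∀ a : α, comp delta a = a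
  comp_delta : ∀ a : α, comp a delta = a
  comp_sup_left : ∀ a b c : α, comp a (b ⊔ c) = comp a b ⊔ comp a c
  conv_sup : ∀ a b : α, conv (a ⊔ b) = conv a ⊔ conv b
  conv_sdiff : ∀ a b : α, conv (a \ b) = conv a \ conv b
  conv_comp : ∀ a b : α, conv (comp a b) = comp (conv b) (conv a)
  peirce : ∀ a b c : α, comp a b ⊓ conv c = ⊥ ↔ comp b c ⊓ conv a = ⊥

open NAAlg

/-- Set-theoretic composition of binary relations (as sets of pairs). -/
def setRelComp {U : Type*} (r s : Set (U × U)) : Set (U × U) :=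
  {p | ∃ y, (p.1, y) ∈ r ∧ (y, p.2) ∈ s}

/-- Image of a binary relation under a map, in both components. -/
def mapRel {U V : Type*} (i : U → V) (r : Set (U × U)) : Set (V × V) :=
  (fun p : U × U => (i p.1, i p.2)) '' r

/-- A weak representation of a non-associative algebra `α` over a domain `U`:
a Boolean algebra homomorphism into `𝒫(U × U)` preserving converse, mapping the
identity to the diagonal, and lax with respect to composition. -/
structure WeakRep (α : Type*) [NAAlg α] (U : Type*) where
  φ : α → Set (U × U)
  map_sup : ∀ a b : α, φ (a ⊔ b) = φ a ∪ φ b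
  map_inf : ∀ a b : α, φ (a ⊓ b) = φ a ∩ φ b
  map_compl : ∀ a : α, φ aᶜ = (φ a)ᶜ
  map_bot : φ ⊥ = ∅
  map_top : φ ⊤ = Set.univ
  map_delta : φ NAAlg.delta = {p | p.1 = p.2}
  map_conv : ∀ a : α, φ (NAAlg.conv a) = {p | (p.2, p.1) ∈ φ a}
  lax_comp : ∀ a b : α, setRelComp (φ a) (φ b) ⊆ φ (NAAlg.comp a b)

/-- Quotient homomorphisms of weak representations preserve strength of composition:
if `(h,i) : Φ → Ψ` is a homomorphism of weak representations with `h` a surjective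
proper homomorphism of non-associative algebras, the square commuting with equality
(`Ψ(h R) = 𝒫(i×i)(Φ R)`), and `Φ` is a proper homomorphism (strong composition),
then `Ψ` is a proper homomorphism as well. -/
theorem quotient_hom_preserves_strength
    {α β U V : Type*} [NAAlg α] [NAAlg β]
    (Φ : WeakRep α U) (Ψ : WeakRep β V)
    (h : α → β) (hsurj : Function.Surjective h)
    (hsup : ∀ a b : α, h (a ⊔ b) = h a ⊔ h b)
    (hinf : ∀ a b : α, h (a ⊓ b) = h a ⊓ h b)
    (hcompl : ∀ a : α, h aᶜ = (h a)ᶜ)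
    (hbot : h ⊥ = ⊥) (htop : h ⊤ = ⊤)
    (hdelta : h NAAlg.delta = NAAlg.delta)
    (hconv : ∀ a : α, h (NAAlg.conv a) = NAAlg.conv (h a))
    (hcomp : ∀ a b : α, h (NAAlg.comp a b) = NAAlg.comp (h a) (h b))
    (i : U → V)
    (hsquare : ∀ R : α, Ψ.φ (h R) = mapRel i (Φ.φ R))
    (hΦproper : ∀ R S : α, Φ.φ (NAAlg.comp R S) = setRelComp (Φ.φ R) (Φ.φ S)) :
    ∀ R S : β, Ψ.φ (NAAlg.comp R S) = setRelComp (Ψ.φ R) (Ψ.φ S) := by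
  intro R S
  obtain ⟨a, rfl⟩ := hsurj R
  obtain ⟨b, rfl⟩ := hsurj S
  apply Set.Subset.antisymm
  · rw [← hcomp, hsquare, hΦproper, hsquare, hsquare]
    rintro ⟨x, y⟩ ⟨⟨u, w⟩, ⟨z, huz, hzw⟩, heq⟩
    exact ⟨i z, ⟨(u, z), huz, by simp [Prod.ext_iff] at heq ⊢; exact heq.1⟩,
      ⟨(z, w), hzw, by simp [Prod.ext_iff] at heq ⊢; exact heq.2⟩⟩
  · exact Ψ.lax_comp _ _
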